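/- In an LMC with no stutter steps, i.e., P(s)(L(s)) = 0 for all s ∈ S, a reflexive symmetric relation R relating only equally labeled states is a weak ε-bisimulation if and only if it is an ε-bisimulation; consequently ∼_ε = ≈^w_ε. -/

import Mathlib

open scoped BigOperators

attribute [local instance] Classical.propDecidable

/-- Mass that a (sub)distribution `μ` assigns to a set `A`. -/
noncomputable def pmass {S : Type*} (μ : S → ℝ) (A : Set S) : ℝ := ∑' a : A, μ a

/-- L1-distance between two functions `S → ℝ`. -/
noncomputable def l1dist {S : Type*} (μ ν : S → ℝ) : ℝ := ∑' s, |μ s - ν s|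

/-- `μ : S → ℝ` is a probability distribution. -/
def IsDistr {S : Type*} (μ : S → ℝ) : Prop :=
  (∀ s, 0 ≤ μ s) ∧ (∀ s, μ s ≤ 1) ∧ HasSum μ 1

/-- Image of a set under a relation. -/
def relImg {S : Type*} (R : S → S → Prop) (A : Set S) : Set S := {t | ∃ s ∈ A, R s t}

/-- ε-bisimulation on a labeled Markov chain with transition function `P` and labeling `lab`. -/
def IsEpsBisim {S L : Type*} (P : S → S → ℝ) (lab : S → L) (ε : ℝ)
    (R : S → S → Prop) : Prop :=
  Reflexive R ∧ Symmetric R ∧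
    ∀ s t, R s t → lab s = lab t ∧
      ∀ A : Set S, pmass (P s) A ≤ pmass (P t) (relImg R A) + ε

/-- ε-APB (approximate probabilistic bisimulation with precision ε). -/
def IsEpsAPB {S L : Type*} (P : S → S → ℝ) (lab : S → L) (ε : ℝ)
    (R : S → S → Prop) : Prop :=
  Reflexive R ∧ Symmetric R ∧
    ∀ s t, R s t → lab s = lab t ∧
      ∀ A : Set S, relImg R A ⊆ A → |pmass (P s) A - pmass (P t) A| ≤ ε

/-- Weight of a finite path witnessing `B U A` starting at `s` and continuing along the list. -/
noncomputable def untilWeight {S : Type*} (P : S → S → ℝ) (B A : Set S) :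
    S → List S → ℝ
  | s, [] => if s ∈ A then 1 else 0
  | s, t :: rest =>
      if s ∈ A then 0 else if s ∈ B then P s t * untilWeight P B A t rest else 0

/-- `Pr_s(B U A)`: probability of reaching `A` from `s` via states in `B`. -/
noncomputable def untilProb {S : Type*} (P : S → S → ℝ) (B A : Set S) (s : S) : ℝ :=
  ∑' l : List S, untilWeight P B A s l

/-- `Pr_s(□C)`: probability of staying in `C` forever, `= 1 - Pr_s(C U Cᶜ)`. -/
noncomputable def boxProb {S : Type*} (P : S → S → ℝ) (C : Set S) (s : S) : ℝ :=
  1 - untilProb P C Cᶜ s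

/-- Weak ε-bisimulation. -/
def IsWeakEpsBisim {S L : Type*} (P : S → S → ℝ) (lab : S → L) (ε : ℝ)
    (R : S → S → Prop) : Prop :=
  Reflexive R ∧ Symmetric R ∧
    ∀ s t, R s t → lab s = lab t ∧
      ∀ A : Set S, untilProb P {u | lab u = lab s} A s ≤
        untilProb P {u | lab u = lab t} (relImg R A) t + ε

/-- Weak ε-bisimilarity of two states. -/
def WeakEpsBisimilar {S L : Type*} (P : S → S → ℝ) (lab : S → L) (ε : ℝ)
    (s t : S) : Prop :=
  ∃ R, IsWeakEpsBisim P lab ε R ∧ R s t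

/-- Up-to-(n,ε)-bisimilarity. -/
def upTo {S L : Type*} (P : S → S → ℝ) (lab : S → L) (ε : ℝ) :
    ℕ → S → S → Prop
  | 0, _, _ => True
  | n + 1, s, t => lab s = lab t ∧
      ∀ A : Set S,
        pmass (P s) A ≤ pmass (P t) (relImg (upTo P lab ε n) A) + ε ∧
        pmass (P t) A ≤ pmass (P s) (relImg (upTo P lab ε n) A) + ε

/-- Branching ε-bisimulation. -/
def IsBranchingEpsBisim {S L : Type*} (P : S → S → ℝ) (lab : S → L) (ε : ℝ)
    (R : S → S → Prop) : Prop :=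
  Equivalence R ∧
    ∀ s t, R s t → lab s = lab t ∧
      ∀ A : Set S, relImg R A ⊆ A →
        |untilProb P {u | R s u} A s - untilProb P {u | R t u} A t| ≤ ε

/-- Transitive ε-bisimulation (equivalently, an ε-APB which is an equivalence). -/
def IsTransEpsBisim {S L : Type*} (P : S → S → ℝ) (lab : S → L) (ε : ℝ)
    (R : S → S → Prop) : Prop :=
  Equivalence R ∧
    ∀ s t, R s t → lab s = lab t ∧
      ∀ A : Set S, relImg R A ⊆ A → |pmass (P s) A - pmass (P t) A| ≤ ε

/-- Exact probabilistic bisimulation. -/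
def IsExactBisim {S L : Type*} (P : S → S → ℝ) (lab : S → L)
    (R : S → S → Prop) : Prop :=
  Equivalence R ∧
    ∀ s t, R s t → lab s = lab t ∧
      ∀ c, pmass (P s) {u | R c u} = pmass (P t) {u | R c u}

/-- `Pr_s(◇^{≤k} G)`: probability of reaching `G` from `s` within `k` steps. -/
noncomputable def reachLe {S : Type*} (P : S → S → ℝ) (G : Set S) :
    ℕ → S → ℝ
  | 0, s => if s ∈ G then 1 else 0
  | k + 1, s => if s ∈ G then 1 else ∑' t, P s t * reachLe P G k t


/-! Without stutter steps a path from `s` cannot linger in the label class `L(s)`, so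
`Pr_s(L(s) U A)` is `1` when `s ∈ A` and the one-step mass `P(s)(A)` otherwise. The weak
transfer condition for `A` is then the strong one for `A`, after discarding from `A` the states
labelled like `s`: they carry no mass under `P(s)`, and their `R`-images, being labelled like `t`,
cannot contain `t`. -/

section Pmass

variable {S : Type*} {μ : S → ℝ}

lemma pmass_mono (h0 : ∀ s, 0 ≤ μ s) (hμ : Summable μ) {A B : Set S} (hAB : A ⊆ B) :
    pmass μ A ≤ pmass μ B := by
  rw [pmass, pmass, tsum_subtype, tsum_subtype]
  exact hμ.indicator A |>.tsum_le_tsum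
    (fun x => Set.indicator_le_indicator_of_subset hAB h0 x) (hμ.indicator B)

lemma IsDistr.pmass_le_one (hμ : IsDistr μ) (A : Set S) : pmass μ A ≤ 1 :=
  hμ.2.2.tsum_eq ▸ hμ.2.2.summable.tsum_subtype_le μ A hμ.1

lemma IsDistr.pmass_univ (hμ : IsDistr μ) : pmass μ Set.univ = 1 := by
  rw [pmass, tsum_univ, hμ.2.2.tsum_eq]

lemma IsDistr.eq_zero_of_pmass_eq_zero (hμ : IsDistr μ) {B : Set S} (hB : pmass μ B = 0)
    {u : S} (hu : u ∈ B) : μ u = 0 := by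
  have hle : μ u ≤ pmass μ B := (hμ.2.2.summable.subtype B).le_tsum ⟨u, hu⟩ fun b _ => hμ.1 b.1
  linarith [hμ.1 u]

lemma pmass_diff_of_eq_zero {A B : Set S} (hB : ∀ u ∈ B, μ u = 0) :
    pmass μ (A \ B) = pmass μ A := by
  rw [pmass, pmass, tsum_subtype, tsum_subtype]
  refine tsum_congr fun x => ?_
  by_cases hxB : x ∈ B <;> simp [Set.indicator, hxB, hB]

end Pmass

section Until

variable {S : Type*} {P : S → S → ℝ} {B A : Set S} {s : S}

lemma untilProb_of_mem (hs : s ∈ A) : untilProb P B A s = 1 := by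
  rw [untilProb, tsum_eq_single []]
  · simp [untilWeight, hs]
  · rintro (_ | ⟨t, r⟩) hl
    · exact absurd rfl hl
    · simp [untilWeight, hs]

lemma untilWeight_singleton (hsA : s ∉ A) (hsB : s ∈ B) (t : S) :
    untilWeight P B A s [t] = A.indicator (P s) t := by
  by_cases htA : t ∈ A <;> simp [untilWeight, hsA, hsB, htA]

/-- A path witnessing `B U A` with two or more steps must enter `B` in its first step, which
`P s` forbids. -/
lemma untilWeight_eq_zero_of_length_ne_one (hsA : s ∉ A) (hz : ∀ u ∈ B, P s u = 0)
    {l : List S} (hl : l.length ≠ 1) : untilWeight P B A s l = 0 := by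
  rcases l with _ | ⟨t, _ | ⟨u, r⟩⟩
  · simp [untilWeight, hsA]
  · exact absurd rfl hl
  · by_cases htB : t ∈ B <;> simp [untilWeight, hsA, htB, hz t]

lemma untilProb_of_not_mem (hsA : s ∉ A) (hsB : s ∈ B) (hz : ∀ u ∈ B, P s u = 0) :
    untilProb P B A s = pmass (P s) A := by
  have hsupp : Function.support (untilWeight P B A s) ⊆ Set.range fun t : S => [t] := by
    intro l hl
    by_contra hrange
    refine hl (untilWeight_eq_zero_of_length_ne_one hsA hz fun hlen => hrange ?_)
    obtain ⟨t, rfl⟩ := List.length_eq_one_iff.mp hlen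
    exact ⟨t, rfl⟩
  rw [untilProb, ← List.singleton_injective.tsum_eq hsupp, pmass, tsum_subtype]
  exact tsum_congr (untilWeight_singleton hsA hsB)

end Until

section NoStutter

variable {S L : Type*} {P : S → S → ℝ} {lab : S → L} {ε : ℝ} {R : S → S → Prop}

lemma untilProb_labelClass_of_not_mem (hz : ∀ s u, lab u = lab s → P s u = 0) {s : S}
    {A : Set S} (hs : s ∉ A) : untilProb P {u | lab u = lab s} A s = pmass (P s) A :=
  untilProb_of_not_mem hs rfl (hz s)

lemma IsEpsBisim.eps_nonneg (hP : ∀ s, IsDistr (P s)) (hR : IsEpsBisim P lab ε R) (s : S) :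
    0 ≤ ε := by
  have h := (hR.2.2 s s (hR.1 s)).2 Set.univ
  rw [(hP s).pmass_univ] at h
  linarith [(hP s).pmass_le_one (relImg R Set.univ)]

lemma IsEpsBisim.isWeakEpsBisim (hP : ∀ s, IsDistr (P s))
    (hz : ∀ s u, lab u = lab s → P s u = 0) (hR : IsEpsBisim P lab ε R) :
    IsWeakEpsBisim P lab ε R := by
  refine ⟨hR.1, hR.2.1, fun s t hst => ⟨(hR.2.2 s t hst).1, fun A => ?_⟩⟩
  have hε := hR.eps_nonneg hP s
  by_cases hsA : s ∈ A
  · rw [untilProb_of_mem hsA, untilProb_of_mem (show t ∈ relImg R A from ⟨s, hsA, hst⟩)]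
    linarith
  rw [untilProb_labelClass_of_not_mem hz hsA]
  by_cases htA : t ∈ relImg R A
  · rw [untilProb_of_mem htA]
    linarith [(hP s).pmass_le_one A]
  · rw [untilProb_labelClass_of_not_mem hz htA]
    exact (hR.2.2 s t hst).2 A

lemma IsWeakEpsBisim.isEpsBisim (hP : ∀ s, IsDistr (P s))
    (hz : ∀ s u, lab u = lab s → P s u = 0) (hR : IsWeakEpsBisim P lab ε R) :
    IsEpsBisim P lab ε R := by
  refine ⟨hR.1, hR.2.1, fun s t hst => ⟨(hR.2.2 s t hst).1, fun A => ?_⟩⟩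
  set A' := A \ {u | lab u = lab s}
  have hsA' : s ∉ A' := fun h => h.2 rfl
  have htA' : t ∉ relImg R A' := by
    rintro ⟨u, hu, hut⟩
    exact hu.2 ((hR.2.2 u t hut).1.trans (hR.2.2 s t hst).1.symm)
  have hweak := (hR.2.2 s t hst).2 A'
  rw [untilProb_labelClass_of_not_mem hz hsA', untilProb_labelClass_of_not_mem hz htA'] at hweak
  have hdiff : pmass (P s) A' = pmass (P s) A := pmass_diff_of_eq_zero fun u hu => hz s u hu
  have hmono : pmass (P t) (relImg R A') ≤ pmass (P t) (relImg R A) :=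
    pmass_mono (hP t).1 (hP t).2.2.summable fun x ⟨u, hu, hux⟩ => ⟨u, hu.1, hux⟩
  linarith

end NoStutter

theorem noStutter_weak_eq_epsBisim_general {S L : Type*}
    (P : S → S → ℝ) (lab : S → L)
    (hP : ∀ s, IsDistr (P s))
    (ε : ℝ)
    (hns : ∀ s, pmass (P s) {u | lab u = lab s} = 0) :
    (∀ R : S → S → Prop, IsWeakEpsBisim P lab ε R ↔ IsEpsBisim P lab ε R) ∧
    (∀ s t : S, (∃ R, IsEpsBisim P lab ε R ∧ R s t) ↔ WeakEpsBisimilar P lab ε s t) := by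
  have hz : ∀ s u, lab u = lab s → P s u = 0 := fun s _ hu =>
    (hP s).eq_zero_of_pmass_eq_zero (hns s) hu
  have hiff : ∀ R, IsWeakEpsBisim P lab ε R ↔ IsEpsBisim P lab ε R := fun _ =>
    ⟨IsWeakEpsBisim.isEpsBisim hP hz, IsEpsBisim.isWeakEpsBisim hP hz⟩
  exact ⟨hiff, fun _ _ => exists_congr fun R => and_congr_left' (hiff R).symm⟩

theorem noStutter_weak_eq_epsBisim {S L : Type*} [Countable S] [Nonempty S]
    (P : S → S → ℝ) (lab : S → L)
    (hP : ∀ s, IsDistr (P s)) (hfb : ∀ s, (Function.support (P s)).Finite)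
    (ε : ℝ)
    (hns : ∀ s, pmass (P s) {u | lab u = lab s} = 0) :
    (∀ R : S → S → Prop, IsWeakEpsBisim P lab ε R ↔ IsEpsBisim P lab ε R) ∧
    (∀ s t : S, (∃ R, IsEpsBisim P lab ε R ∧ R s t) ↔ WeakEpsBisimilar P lab ε s t) :=
  noStutter_weak_eq_epsBisim_general P lab hP ε hns
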